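/- arXiv:2408.02848 — 3 statements merged into one kernel-verified Lean document; each statement's English description precedes it below -/
import Mathlib

section
/- Let a, b ≥ 0 be integers, n = a+b+1, and R = ℤ[z_1,…,z_a, y_1,…,y_b, x]. Let M = D_X(Λ(a,b,0,1)) be the n×n matrix over R with rows and columns indexed by K ⊔ T ⊔ {*} (|K| = a, |T| = b): diagonal entries z_1,…,z_a on K, y_1,…,y_b on T, and x at *; off-diagonal entries: 1 between two distinct K-indices, 1 from a K-index to a T-index, 2 from a K-index to *, 2 from a T-index to a K-index, 2 between two distinct T-indices, 1 from a T-index to *, and 1 from * to every K-index and every T-index. Let L be the n×n matrix over R with rows and columns indexed by {*} ⊔ T ⊔ K, with entries: L(*,*) = x, L(*,t) = 1 for every t ∈ T, L(*,k) = 1 for every k ∈ K; for t ∈ T: L(t,*) = 1 − 2x, L(t,t) = y_t − 2, and all other entries in row t are 0; for k ∈ K: L(k,*) = 2 − x, L(k,k) = z_k − 1, and all other entries in row k are 0. Then for every 1 ≤ j ≤ n, the ideal of R generated by the determinants of all j×j submatrices of M equals the ideal generated by the determinants of all j×j submatrices of L. -/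
open MvPolynomial

/-- The ideal generated by the determinants of all `j × j` submatrices of a square
matrix `M` (choices of `j` rows and `j` columns). -/
def minorsIdeal {R : Type*} [CommRing R] {m : Type*} (M : Matrix m m R) (k : ℕ) : Ideal R :=
  Ideal.span { p | ∃ (r c : Fin k → m), Function.Injective r ∧ Function.Injective c ∧
    p = (M.submatrix r c).det }

/-- Variables: `z_1, …, z_a` (left), `y_1, …, y_b` (middle), `x` (right). -/
abbrev LVar (a b : ℕ) := Fin a ⊕ Fin b ⊕ Unit

/-- The matrix `D_X(Λ(a,b,0,1))`, with rows and columns indexed by `K ⊔ T ⊔ {*}`. -/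
noncomputable def lambdaDX (a b : ℕ) :
    Matrix (Fin a ⊕ Fin b ⊕ Unit) (Fin a ⊕ Fin b ⊕ Unit) (MvPolynomial (LVar a b) ℤ) :=
  Matrix.of fun p q =>
    match p, q with
    | .inl i, .inl j => if i = j then X (.inl i) else 1
    | .inl _, .inr (.inl _) => 1
    | .inl _, .inr (.inr _) => 2
    | .inr (.inl _), .inl _ => 2
    | .inr (.inl i), .inr (.inl j) => if i = j then X (.inr (.inl i)) else 2
    | .inr (.inl _), .inr (.inr _) => 1
    | .inr (.inr _), .inl _ => 1
    | .inr (.inr _), .inr (.inl _) => 1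
    | .inr (.inr _), .inr (.inr _) => X (.inr (.inr ()))

/-- The matrix `L`, with rows and columns indexed by `{*} ⊔ T ⊔ K`. -/
noncomputable def Lmatrix (a b : ℕ) :
    Matrix (Unit ⊕ Fin b ⊕ Fin a) (Unit ⊕ Fin b ⊕ Fin a) (MvPolynomial (LVar a b) ℤ) :=
  Matrix.of fun p q =>
    match p, q with
    | .inl _, .inl _ => X (.inr (.inr ()))
    | .inl _, .inr (.inl _) => 1
    | .inl _, .inr (.inr _) => 1
    | .inr (.inl _), .inl _ => 1 - 2 * X (.inr (.inr ()))
    | .inr (.inl t), .inr (.inl t') => if t = t' then X (.inr (.inl t)) - 2 else 0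
    | .inr (.inl _), .inr (.inr _) => 0
    | .inr (.inr _), .inl _ => 2 - X (.inr (.inr ()))
    | .inr (.inr _), .inr (.inl _) => 0
    | .inr (.inr k), .inr (.inr k') => if k = k' then X (.inl k) - 1 else 0
/-!
Listing the indices of `lambdaDX` as `{*} ⊔ T ⊔ K` puts the `*`-row `(x, 1, …, 1)` on top; subtracting
it twice from every `T`-row and once from every `K`-row turns the matrix into `L`. This elimination
is left multiplication by the unipotent matrix `1 + c e_*ᵀ` (with `c_* = 0`), and the ideal of
`j`-minors is invariant both under simultaneous reindexing of rows and columns and under left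
multiplication by an invertible matrix: by multilinearity of the determinant in its rows, every
`j`-minor of `A * M` is an `R`-linear combination of `j`-minors of `M`.
-/

section MinorsIdeal

variable {R : Type*} [CommRing R]

theorem minorsIdeal_submatrix_le {m m' : Type*} (M : Matrix m m R) {e : m' → m}
    (he : Function.Injective e) (k : ℕ) :
    minorsIdeal (M.submatrix e e) k ≤ minorsIdeal M k :=
  Ideal.span_le.2 fun _ ⟨r, c, hr, hc, hp⟩ =>
    Ideal.subset_span ⟨e ∘ r, e ∘ c, he.comp hr, he.comp hc, hp⟩

theorem minorsIdeal_submatrix_equiv {m m' : Type*} (M : Matrix m m R) (e : m' ≃ m) (k : ℕ) :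
    minorsIdeal (M.submatrix e e) k = minorsIdeal M k := by
  refine le_antisymm (minorsIdeal_submatrix_le M e.injective k) ?_
  simpa using minorsIdeal_submatrix_le (M.submatrix e e) e.symm.injective k

variable {n : Type*} [Fintype n] [DecidableEq n]

theorem minorsIdeal_mul_le (A M : Matrix n n R) (k : ℕ) :
    minorsIdeal (A * M) k ≤ minorsIdeal M k := by
  refine Ideal.span_le.2 ?_
  rintro _ ⟨r, c, -, hc, rfl⟩
  have hrows : (A * M).submatrix r c = fun x => ∑ l, A (r x) l • fun y => M l (c y) := by
    ext x y
    simp [Matrix.mul_apply]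
  rw [SetLike.mem_coe, hrows]
  change (Matrix.detRowAlternating : (Fin k → R) [⋀^Fin k]→ₗ[R] R) _ ∈ _
  rw [← AlternatingMap.coe_multilinearMap, MultilinearMap.map_sum]
  refine Ideal.sum_mem _ fun f _ => ?_
  rw [MultilinearMap.map_smul_univ, smul_eq_mul]
  refine Ideal.mul_mem_left _ _ ?_
  by_cases hf : Function.Injective f
  · exact Ideal.subset_span ⟨f, c, hf, hc, rfl⟩
  · rw [AlternatingMap.coe_multilinearMap, AlternatingMap.map_eq_zero_of_not_injective]
    · exact zero_mem _
    · exact fun h => hf (Function.Injective.of_comp (f := fun l y => M l (c y)) h)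

theorem minorsIdeal_mul_of_isUnit {A : Matrix n n R} (hA : IsUnit A) (M : Matrix n n R) (k : ℕ) :
    minorsIdeal (A * M) k = minorsIdeal M k := by
  refine le_antisymm (minorsIdeal_mul_le A M k) ?_
  obtain ⟨B, hBA⟩ : ∃ B, B * A = 1 := ⟨_, hA.unit.inv_mul⟩
  calc minorsIdeal M k = minorsIdeal (B * (A * M)) k := by
        rw [← Matrix.mul_assoc, hBA, Matrix.one_mul]
    _ ≤ minorsIdeal (A * M) k := minorsIdeal_mul_le B (A * M) k

end MinorsIdeal

section RowAddition

variable {R : Type*} [CommRing R] {n : Type*} [Fintype n] [DecidableEq n]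

theorem isUnit_one_add_vecMulVec_single {c : n → R} {i : n} (hc : c i = 0) :
    IsUnit (1 + Matrix.vecMulVec c (Pi.single i 1)) :=
  IsNilpotent.isUnit_one_add ⟨2, by simp [pow_two, Matrix.vecMulVec_mul_vecMulVec, hc]⟩

theorem one_add_vecMulVec_single_mul (c : n → R) (i : n) (M : Matrix n n R) :
    (1 + Matrix.vecMulVec c (Pi.single i 1)) * M = M + Matrix.vecMulVec c (M.row i) := by
  rw [add_mul, Matrix.one_mul, Matrix.vecMulVec_mul, Matrix.single_one_vecMul]

end RowAddition

def lambdaIndexEquiv (a b : ℕ) : (Unit ⊕ Fin b ⊕ Fin a) ≃ (Fin a ⊕ Fin b ⊕ Unit) :=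
  (Equiv.sumComm _ _).trans
    (((Equiv.sumComm _ _).sumCongr (Equiv.refl _)).trans (Equiv.sumAssoc _ _ _))

theorem Lmatrix_eq_mul_submatrix_lambdaDX (a b : ℕ) :
    Lmatrix a b = (1 + Matrix.vecMulVec (Sum.elim 0 (Sum.elim (fun _ => -2) fun _ => -1))
      (Pi.single (Sum.inl ()) 1)) *
        (lambdaDX a b).submatrix (lambdaIndexEquiv a b) (lambdaIndexEquiv a b) := by
  rw [one_add_vecMulVec_single_mul]
  refine Matrix.ext ?_
  rintro (⟨⟩ | t | k) (⟨⟩ | t' | k') <;>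
    simp [Lmatrix, lambdaDX, lambdaIndexEquiv, Matrix.vecMulVec_apply, sub_eq_add_neg, ite_add]

theorem minors_ideals_lambda_eq_L (a b : ℕ) :
    ∀ j : ℕ, 1 ≤ j → j ≤ a + b + 1 →
      minorsIdeal (lambdaDX a b) j = minorsIdeal (Lmatrix a b) j := by
  intro j _ _
  rw [Lmatrix_eq_mul_submatrix_lambdaDX,
    minorsIdeal_mul_of_isUnit (isUnit_one_add_vecMulVec_single ?_), minorsIdeal_submatrix_equiv]
  rfl
end

section
/- Let a, b ≥ 0 be integers, n = a+b+1, and R = ℤ[z_1,…,z_a, y_1,…,y_b, x]. Let M = D_X(Λ(a,b,0,1)) be the n×n matrix over R with rows and columns indexed by K ⊔ T ⊔ {*} (|K| = a, |T| = b): diagonal entries z_1,…,z_a on K, y_1,…,y_b on T, and x at *; off-diagonal entries: 1 between two distinct K-indices, 1 from a K-index to a T-index, 2 from a K-index to *, 2 from a T-index to a K-index, 2 between two distinct T-indices, 1 from a T-index to *, and 1 from * to every K-index and every T-index. Then det(M) = x·∏_{r=1}^{b}(y_r − 2)·∏_{s=1}^{a}(z_s − 1) − Σ_{r=1}^{b}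 (1 − 2x)·(∏_{r' ≠ r}(y_{r'} − 2))·∏_{s=1}^{a}(z_s − 1) − Σ_{s=1}^{a} (2 − x)·∏_{r=1}^{b}(y_r − 2)·(∏_{s' ≠ s}(z_{s'} − 1)). -/
open MvPolynomial Finset

/-!
Subtracting the row of `*` once from every `K`-row and twice from every `T`-row (a unimodular
row operation) turns `D_X(Λ(a,b,0,1))` into an arrow matrix `N = [[A, B], [C, x]]` with
`A = diag(z_s - 1, y_r - 2)`, `B = (2 - x, 1 - 2x)` and `C` all ones. Multiplying `N` on the left by
`[[1, 0], [-C adj A, det A]]` makes it block triangular, so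
`det A * det N = det A * (x det A - C adj A B)`. Cancelling `det A ≠ 0` gives the formula, since
`adj A` is diagonal with entries `∏_{j ≠ i} A_jj`.
-/

namespace Finset

variable {ι κ M : Type*} [Fintype ι] [Fintype κ] [DecidableEq ι] [DecidableEq κ] [CommMonoid M]

theorem prod_univ_erase_inl (f : ι ⊕ κ → M) (i : ι) :
    ∏ j ∈ univ.erase (Sum.inl i), f j = (∏ i' ∈ univ.erase i, f (.inl i')) * ∏ k, f (.inr k) := by
  rw [show univ.erase (Sum.inl i) = (univ.erase i).disjSum univ by ext (j | k) <;> simp,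
    prod_disjSum]

theorem prod_univ_erase_inr (f : ι ⊕ κ → M) (k : κ) :
    ∏ j ∈ univ.erase (Sum.inr k), f j = (∏ i, f (.inl i)) * ∏ k' ∈ univ.erase k, f (.inr k') := by
  rw [show univ.erase (Sum.inr k) = univ.disjSum (univ.erase k) by ext (j | k) <;> simp,
    prod_disjSum]

end Finset

namespace Matrix

variable {m n R : Type*} [Fintype m] [Fintype n] [DecidableEq m] [DecidableEq n] [CommRing R]

theorem det_pow_card_mul_det_fromBlocks (A : Matrix m m R) (B : Matrix m n R)
    (C : Matrix n m R) (D : Matrix n n R) :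
    A.det ^ Fintype.card n * (fromBlocks A B C D).det =
      A.det * (A.det • D - C * A.adjugate * B).det := by
  have hL : fromBlocks 1 0 (-(C * A.adjugate)) (A.det • 1) * fromBlocks A B C D =
      fromBlocks A B 0 (A.det • D - C * A.adjugate * B) := by
    rw [fromBlocks_multiply, Matrix.neg_mul, Matrix.mul_assoc, adjugate_mul]
    simp [sub_eq_neg_add, Matrix.mul_assoc]
  have := congrArg det hL
  rwa [det_mul, det_fromBlocks_zero₁₂, det_fromBlocks_zero₂₁, det_one, one_mul, det_smul,
    det_one, mul_one] at this

theorem det_fromBlocks_diagonal_replicateCol [IsDomain R] {d : m → R} (hd : ∀ i, d i ≠ 0)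
    (v u : m → R) (x : R) :
    (fromBlocks (diagonal d) (replicateCol Unit v) (replicateRow Unit u) (of fun _ _ => x)).det =
      x * ∏ i, d i - ∑ i, u i * v i * ∏ j ∈ Finset.univ.erase i, d j := by
  have h := det_pow_card_mul_det_fromBlocks (diagonal d) (replicateCol Unit v)
    (replicateRow Unit u) (of fun _ _ => x)
  rw [Fintype.card_unit, pow_one, det_diagonal] at h
  rw [mul_left_cancel₀ (Finset.prod_ne_zero_iff.mpr fun i _ => hd i) h, det_unique]
  simp only [adjugate_diagonal, PUnit.default_eq_unit, sub_apply, smul_apply, of_apply,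
    smul_eq_mul, mul_apply, replicateRow_apply, replicateCol_apply, diagonal_apply, mul_ite,
    mul_zero, Finset.sum_ite_eq', Finset.mem_univ, if_true]
  exact congrArg₂ _ (mul_comm _ _) (Finset.sum_congr rfl fun i _ => by ring)

end Matrix

namespace lambdaDX

open Matrix

variable (a b : ℕ)

noncomputable def pivot : Fin a ⊕ Fin b → MvPolynomial (LVar a b) ℤ :=
  Sum.elim (fun s => X (.inl s) - 1) (fun r => X (.inr (.inl r)) - 2)

noncomputable def lastCol : Fin a ⊕ Fin b → MvPolynomial (LVar a b) ℤ :=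
  Sum.elim (fun _ => 2 - X (.inr (.inr ()))) (fun _ => 1 - 2 * X (.inr (.inr ())))

theorem pivot_ne_zero (i : Fin a ⊕ Fin b) : pivot a b i ≠ 0 := fun h => by
  have := congrArg (eval fun _ => 3) h
  rcases i with s | r <;> norm_num [pivot] at this

theorem fromBlocks_mul_reindex :
    fromBlocks 1 (-replicateCol Unit (Sum.elim 1 2)) 0 1 *
        reindex (Equiv.sumAssoc _ _ _).symm (Equiv.sumAssoc _ _ _).symm (lambdaDX a b) =
      fromBlocks (diagonal (pivot a b)) (replicateCol Unit (lastCol a b)) (replicateRow Unit 1)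
        (of fun _ _ => X (.inr (.inr ()))) := by
  refine Matrix.ext fun p q => ?_
  rcases p with (i | r) | u <;> rcases q with (j | s) | u <;>
    simp [mul_apply, one_apply, lambdaDX, pivot, lastCol, diagonal_apply, sub_eq_add_neg, ite_add]

theorem det_eq_det_fromBlocks :
    (lambdaDX a b).det =
      (fromBlocks (diagonal (pivot a b)) (replicateCol Unit (lastCol a b)) (replicateRow Unit 1)
        (of fun _ _ => X (.inr (.inr ())))).det := by
  rw [← fromBlocks_mul_reindex, det_mul, det_fromBlocks_zero₂₁, det_one, det_one, one_mul, one_mul,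
    det_reindex_self]

end lambdaDX

open Matrix in
theorem det_lambdaDX (a b : ℕ) :
    (lambdaDX a b).det =
      X (.inr (.inr ())) * (∏ r : Fin b, (X (.inr (.inl r)) - 2)) *
          (∏ s : Fin a, (X (.inl s) - 1)) -
        (∑ r : Fin b, (1 - 2 * X (.inr (.inr ()))) *
          (∏ r' ∈ Finset.univ.erase r, (X (.inr (.inl r')) - 2)) *
          (∏ s : Fin a, (X (.inl s) - 1))) -
        (∑ s : Fin a, (2 - X (.inr (.inr ()))) *
          (∏ r : Fin b, (X (.inr (.inl r)) - 2)) *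
          (∏ s' ∈ Finset.univ.erase s, (X (.inl s') - 1))) := by
  rw [lambdaDX.det_eq_det_fromBlocks,
    det_fromBlocks_diagonal_replicateCol (lambdaDX.pivot_ne_zero a b), Fintype.prod_sum_type,
    Fintype.sum_sum_type]
  simp only [prod_univ_erase_inl, prod_univ_erase_inr, lambdaDX.pivot, lambdaDX.lastCol,
    Sum.elim_inl, Sum.elim_inr, Pi.one_apply, one_mul]
  ring_nf
end

section
/- Let a ≥ 0 be an integer and n = a+2. Let D(Λ(a,1,0,1)) be the n×n integer matrix with rows and columns indexed by K ⊔ {t} ⊔ {*} (|K| = a), with all diagonal entries 0 and off-diagonal entries: 1 between two distinct K-indices, 1 from a K-index to t, 2 from a K-index to *, 2 from t to a K-index, 1 from t to *, and 1 from * to every K-index and to t. Then D(Λ(a,1,0,1)) is equivalent over ℤ to the diagonal matrix with a+1 diagonal entries equal to 1 followed by one diagonal entry equal to 4a + 1. -/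
set_option linter.unreachableTactic false
set_option linter.unnecessarySeqFocus false

/-- Two square integer matrices are equivalent over ℤ if one is obtained from the
other by multiplying on the left and right by matrices invertible over ℤ. -/
def IntEquiv {m : Type*} [Fintype m] [DecidableEq m] (M N : Matrix m m ℤ) : Prop :=
  ∃ P Q : Matrix m m ℤ, IsUnit P.det ∧ IsUnit Q.det ∧ P * M * Q = N

/-- The distance matrix `D(Λ(a,1,0,1))`, with rows and columns indexed by
`K ⊔ {t} ⊔ {*}`: indices `< a` form `K`, index `a` is `t`, and index `a+1` is `*`. -/
def lambdaD (a : ℕ) : Matrix (Fin (a + 2)) (Fin (a + 2)) ℤ :=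
  Matrix.of fun i j =>
    if i = j then 0
    else if i.val < a then (if j.val < a then 1 else if j.val = a then 1 else 2)
    else if i.val = a then (if j.val < a then 2 else 1)
    else 1

/-- Left transformation matrix. -/
def Pmat (a : ℕ) : Matrix (Fin (a + 2)) (Fin (a + 2)) ℤ :=
  Matrix.of fun i j =>
    if i.val < a then (if j = i then -1 else if j.val = a + 1 then 1 else 0)
    else if i.val = a then (if j.val < a then -1 else if j.val = a then -1 else (a : ℤ) + 1)
    else (if j.val < a then 2 else if j.val = a then 1 else -2 * (a : ℤ))

/-- Inverse of `Pmat`. -/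
def Pinv (a : ℕ) : Matrix (Fin (a + 2)) (Fin (a + 2)) ℤ :=
  Matrix.of fun i j =>
    if i.val < a then (if j = i then 0 else 1)
    else if i.val = a then (if j.val < a then 2 else if j.val = a then 0 else 1)
    else 1

/-- Right transformation matrix. -/
def Qmat (a : ℕ) : Matrix (Fin (a + 2)) (Fin (a + 2)) ℤ :=
  Matrix.of fun i j =>
    if j = i then 1
    else if j.val = a + 1 then (if i.val < a then 2 else if i.val = a then 2 * (a : ℤ) + 1 else 0)
    else 0

/-- Intermediate matrix `Pmat * lambdaD`. -/
def Emat (a : ℕ) : Matrix (Fin (a + 2)) (Fin (a + 2)) ℤ :=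
  Matrix.of fun i j =>
    if i.val < a then (if j = i then 1 else if j.val = a + 1 then -2 else 0)
    else if i.val = a then (if j.val = a then 1 else if j.val = a + 1 then -(2 * (a : ℤ) + 1) else 0)
    else (if j.val = a + 1 then 4 * (a : ℤ) + 1 else 0)

lemma sum_split (a : ℕ) (f : Fin (a + 2) → ℤ) :
    ∑ k, f k = (∑ k : Fin a, f ⟨k.val, by omega⟩) + f ⟨a, by omega⟩ + f ⟨a + 1, by omega⟩ := by
  rw [Fin.sum_univ_castSucc, Fin.sum_univ_castSucc]
  rfl

lemma sum_eval_const (a : ℕ) (f : Fin (a + 2) → ℤ) (d : ℤ)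
    (h1 : ∀ k : Fin (a + 2), k.val < a → f k = d) :
    ∑ k, f k = (a : ℤ) * d + f ⟨a, by omega⟩ + f ⟨a + 1, by omega⟩ := by
  rw [sum_split]
  congr 2
  rw [Finset.sum_congr rfl (fun k _ => h1 ⟨k.val, by omega⟩ k.isLt)]
  simp [mul_comm]

lemma sum_eval (a : ℕ) (f : Fin (a + 2) → ℤ) (v : ℕ) (hv : v < a) (d : ℤ)
    (h1 : ∀ k : Fin (a + 2), k.val < a → k.val ≠ v → f k = d) :
    ∑ k, f k = f ⟨v, by omega⟩ + ((a : ℤ) - 1) * d + f ⟨a, by omega⟩ + f ⟨a + 1, by omega⟩ := by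
  rw [sum_split]
  have key : ∀ k : Fin a, f ⟨k.val, by omega⟩
      = d + (if k = ⟨v, hv⟩ then f ⟨v, by omega⟩ - d else 0) := by
    intro k
    by_cases hk : k = ⟨v, hv⟩
    · subst hk; simp
    · rw [h1 ⟨k.val, by omega⟩ k.isLt (by simpa [Fin.ext_iff] using hk), if_neg hk]; ring
  rw [Finset.sum_congr rfl (fun k _ => key k), Finset.sum_add_distrib, Finset.sum_const,
    Finset.sum_ite_eq' Finset.univ, if_pos (Finset.mem_univ _)]
  simp only [Finset.card_univ, Fintype.card_fin, nsmul_eq_mul]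
  ring

lemma hPPinv (a : ℕ) : Pmat a * Pinv a = 1 := by
  ext i j
  rw [Matrix.mul_apply]
  rcases Nat.lt_trichotomy i.val a with hi | hi | hi
  · rw [sum_eval a _ i.val hi 0 (by
      intro k hk hkv
      simp [Pmat, Pinv, Fin.ext_iff, hk, hkv] <;> first | omega | (split_ifs <;> omega))]
    simp [Pmat, Pinv, Matrix.one_apply, Fin.ext_iff, hi] <;>
      first | omega | (split_ifs <;> omega)
  · by_cases hj : j.val < a
    · rw [sum_eval a _ j.val hj (-1) (by
        intro k hk hkv
        simp [Pmat, Pinv, Fin.ext_iff, hk, hkv, hi] <;> first | omega | (split_ifs <;> omega))]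
      simp [Pmat, Pinv, Matrix.one_apply, Fin.ext_iff, hi, hj] <;>
        first | omega | (split_ifs <;> omega)
    · rw [sum_eval_const a _ (-1) (by
        intro k hk
        simp [Pmat, Pinv, Fin.ext_iff, hk, hi] <;> first | omega | (split_ifs <;> omega))]
      simp [Pmat, Pinv, Matrix.one_apply, Fin.ext_iff, hi, hj] <;>
        first | omega | (split_ifs <;> omega)
  · have hi' : i.val = a + 1 := by omega
    by_cases hj : j.val < a
    · rw [sum_eval a _ j.val hj 2 (by
        intro k hk hkv
        simp [Pmat, Pinv, Fin.ext_iff, hk, hkv, hi'] <;> first | omega | (split_ifs <;> omega))]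
      simp [Pmat, Pinv, Matrix.one_apply, Fin.ext_iff, hi', hj] <;>
        first | omega | (split_ifs <;> omega)
    · rw [sum_eval_const a _ 2 (by
        intro k hk
        simp [Pmat, Pinv, Fin.ext_iff, hk, hi'] <;> first | omega | (split_ifs <;> omega))]
      simp [Pmat, Pinv, Matrix.one_apply, Fin.ext_iff, hi', hj] <;>
        first | omega | (split_ifs <;> omega)

lemma hPD (a : ℕ) : Pmat a * lambdaD a = Emat a := by
  ext i j
  rw [Matrix.mul_apply]
  rcases Nat.lt_trichotomy i.val a with hi | hi | hi
  · rw [sum_eval a _ i.val hi 0 (by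
      intro k hk hkv
      simp [Pmat, lambdaD, Fin.ext_iff, hk, hkv] <;> first | omega | (split_ifs <;> omega))]
    simp [Pmat, lambdaD, Emat, Fin.ext_iff, hi] <;>
      first | omega | (split_ifs <;> omega)
  · by_cases hj : j.val < a
    · rw [sum_eval a _ j.val hj (-1) (by
        intro k hk hkv
        simp [Pmat, lambdaD, Fin.ext_iff, hk, hkv, hi, hj] <;>
          first | omega | (split_ifs <;> omega))]
      simp [Pmat, lambdaD, Emat, Fin.ext_iff, hi, hj] <;>
        first | omega | (split_ifs <;> omega)
    · by_cases hj2 : j.val = a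
      · rw [sum_eval_const a _ (-1) (by
          intro k hk
          simp [Pmat, lambdaD, Fin.ext_iff, hk, hi, hj2] <;>
            first | omega | (split_ifs <;> omega))]
        simp [Pmat, lambdaD, Emat, Fin.ext_iff, hi, hj2] <;>
          first | omega | (split_ifs <;> omega)
      · have hj' : j.val = a + 1 := by omega
        rw [sum_eval_const a _ (-2) (by
          intro k hk
          simp [Pmat, lambdaD, Fin.ext_iff, hk, hi, hj'] <;>
            first | omega | (split_ifs <;> omega))]
        simp [Pmat, lambdaD, Emat, Fin.ext_iff, hi, hj'] <;>
          first | omega | (split_ifs <;> omega)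
  · have hi' : i.val = a + 1 := by omega
    by_cases hj : j.val < a
    · rw [sum_eval a _ j.val hj 2 (by
        intro k hk hkv
        simp [Pmat, lambdaD, Fin.ext_iff, hk, hkv, hi', hj] <;>
          first | omega | (split_ifs <;> omega))]
      simp [Pmat, lambdaD, Emat, Fin.ext_iff, hi', hj] <;>
        first | omega | (split_ifs <;> omega)
    · by_cases hj2 : j.val = a
      · rw [sum_eval_const a _ 2 (by
          intro k hk
          simp [Pmat, lambdaD, Fin.ext_iff, hk, hi', hj2] <;>
            first | omega | (split_ifs <;> omega))]
        simp [Pmat, lambdaD, Emat, Fin.ext_iff, hi', hj2] <;>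
          first | omega | (split_ifs <;> omega)
      · have hj' : j.val = a + 1 := by omega
        rw [sum_eval_const a _ 4 (by
          intro k hk
          simp [Pmat, lambdaD, Fin.ext_iff, hk, hi', hj'] <;>
            first | omega | (split_ifs <;> omega))]
        simp [Pmat, lambdaD, Emat, Fin.ext_iff, hi', hj'] <;>
          first | omega | (split_ifs <;> omega)

lemma hEQ (a : ℕ) :
    Emat a * Qmat a
      = Matrix.diagonal (fun i : Fin (a + 2) => if i.val < a + 1 then (1 : ℤ) else 4 * a + 1) := by
  ext i j
  rw [Matrix.mul_apply]
  rcases Nat.lt_trichotomy i.val a with hi | hi | hi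
  · rw [sum_eval a _ i.val hi 0 (by
      intro k hk hkv
      simp [Emat, Qmat, Fin.ext_iff, hk, hkv] <;> first | omega | (split_ifs <;> omega))]
    simp [Emat, Qmat, Matrix.diagonal_apply, Fin.ext_iff, hi] <;>
      first | omega | (split_ifs <;> omega)
  · rw [sum_eval_const a _ 0 (by
      intro k hk
      simp [Emat, Qmat, Fin.ext_iff, hk, hi] <;> first | omega | (split_ifs <;> omega))]
    simp [Emat, Qmat, Matrix.diagonal_apply, Fin.ext_iff, hi] <;>
      first | omega | (split_ifs <;> omega)
  · have hi' : i.val = a + 1 := by omega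
    rw [sum_eval_const a _ 0 (by
      intro k hk
      simp [Emat, Qmat, Fin.ext_iff, hk, hi'] <;> first | omega | (split_ifs <;> omega))]
    simp [Emat, Qmat, Matrix.diagonal_apply, Fin.ext_iff, hi'] <;>
      first | omega | (split_ifs <;> omega)

lemma hQdet (a : ℕ) : (Qmat a).det = 1 := by
  rw [Matrix.det_of_upperTriangular (M := Qmat a) (by
    intro i j hij
    simp only [id] at hij
    have hj := j.isLt
    simp [Qmat, Fin.ext_iff] <;> first | omega | (split_ifs <;> omega))]
  have h : ∀ i : Fin (a + 2), Qmat a i i = 1 := fun i => by simp [Qmat]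
  simp [h]

theorem snf_lambdaD_a101 (a : ℕ) :
    IntEquiv (lambdaD a)
      (Matrix.diagonal fun i : Fin (a + 2) =>
        if i.val < a + 1 then (1 : ℤ) else 4 * a + 1) := by
  refine ⟨Pmat a, Qmat a, Matrix.isUnit_det_of_right_inverse (hPPinv a), ?_, ?_⟩
  · rw [hQdet a]; exact isUnit_one
  · rw [hPD a, hEQ a]
end
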